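/- Let θ ∈ (0,1) and λ ∈ (0,1]. For every δ > 0 there exists a constant C (depending only on δ, θ, λ) such that for all |g| ≤ δ, |h(g) − (1/2)·λ(1−λ)·θ(1−θ)·g²| ≤ C·|g|³, where h(g) = θ·log(1 − λ + λ·e^{−(1−θ)g}) + (1−θ)·log(1 − λ + λ·e^{θg}). That is, the one-block log-liquidity growth of the partially active G3M satisfies ℓ_n − ℓ_{n−1} = (1/2)·λ(1−λ)·θ(1−θ)·g_n² + O(|g_n|³) as g_n → 0. -/

import Mathlib

/-! Both logarithms in `liqGrowth` are values of `t ↦ log (1 - λ + λ eᵗ)`, whose derivative is the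
weight `p = λ eᵗ / (1 - λ + λ eᵗ) ∈ [0, 1]` with `p' = p (1 - p)`. Hence its third derivative
`p (1 - p) (1 - 2p)` is bounded by `1`, and integrating this bound three times from `0` gives its
second-order Taylor expansion with error at most `|t|³`. In the combination defining
`liqGrowth` the linear terms cancel and the quadratic ones add up to `½ λ(1-λ) θ(1-θ) g²`. -/

open Real

/-- One-block change in log-liquidity of the partially active G3M at
pre-arbitrage gap `g`. -/
noncomputable def liqGrowth (θ lam g : ℝ) : ℝ :=
  θ * Real.log (1 - lam + lam * Real.exp (-(1 - θ) * g))
    + (1 - θ) * Real.log (1 - lam + lam * Real.exp (θ * g))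

theorem abs_le_mul_abs_pow_succ_of_hasDerivAt {f f' : ℝ → ℝ} {C : ℝ} {n : ℕ}
    (hf : ∀ x, HasDerivAt f (f' x) x) (hf0 : f 0 = 0) (hf' : ∀ x, |f' x| ≤ C * |x| ^ n)
    (x : ℝ) : |f x| ≤ C * |x| ^ (n + 1) := by
  have hC : 0 ≤ C := by simpa using (abs_nonneg _).trans (hf' 1)
  have hbound : ∀ y ∈ Set.uIcc 0 x, ‖f' y‖ ≤ C * |x| ^ n := fun y hy => by
    have hyx : |y| ≤ |x| := by simpa using Set.abs_sub_left_of_mem_uIcc hy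
    exact (hf' y).trans (by gcongr)
  have := (convex_uIcc 0 x).norm_image_sub_le_of_norm_hasDerivWithin_le
    (fun y _ => (hf y).hasDerivWithinAt) hbound Set.left_mem_uIcc Set.right_mem_uIcc
  simpa [hf0, pow_succ, mul_assoc] using this

section LogMixExp

variable {lam : ℝ}

noncomputable def logMixExp (lam t : ℝ) : ℝ := log (1 - lam + lam * exp t)

noncomputable def mixExpWeight (lam t : ℝ) : ℝ := lam * exp t / (1 - lam + lam * exp t)

theorem one_sub_add_mul_exp_pos (h0 : 0 ≤ lam) (h1 : lam ≤ 1) (t : ℝ) :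
    0 < 1 - lam + lam * exp t := by
  nlinarith [exp_pos t, mul_nonneg h0 (exp_pos t).le]

theorem mixExpWeight_nonneg (h0 : 0 ≤ lam) (h1 : lam ≤ 1) (t : ℝ) : 0 ≤ mixExpWeight lam t :=
  div_nonneg (by positivity) (one_sub_add_mul_exp_pos h0 h1 t).le

theorem mixExpWeight_le_one (h0 : 0 ≤ lam) (h1 : lam ≤ 1) (t : ℝ) : mixExpWeight lam t ≤ 1 :=
  div_le_one_of_le₀ (by linarith) (one_sub_add_mul_exp_pos h0 h1 t).le

theorem hasDerivAt_logMixExp (h0 : 0 ≤ lam) (h1 : lam ≤ 1) (t : ℝ) :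
    HasDerivAt (logMixExp lam) (mixExpWeight lam t) t :=
  (((hasDerivAt_exp t).const_mul lam).const_add (1 - lam)).log
    (one_sub_add_mul_exp_pos h0 h1 t).ne'

theorem hasDerivAt_mixExpWeight (h0 : 0 ≤ lam) (h1 : lam ≤ 1) (t : ℝ) :
    HasDerivAt (mixExpWeight lam) (mixExpWeight lam t * (1 - mixExpWeight lam t)) t := by
  have hu := one_sub_add_mul_exp_pos h0 h1 t
  refine (((hasDerivAt_exp t).const_mul lam).div
    (((hasDerivAt_exp t).const_mul lam).const_add (1 - lam)) hu.ne').congr_deriv ?_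
  simp only [mixExpWeight]
  field_simp

theorem abs_logMixExp_sub_taylor_le (h0 : 0 ≤ lam) (h1 : lam ≤ 1) (t : ℝ) :
    |logMixExp lam t - lam * t - lam * (1 - lam) / 2 * t ^ 2| ≤ |t| ^ 3 := by
  set p := mixExpWeight lam
  have hp : ∀ s, HasDerivAt p (p s * (1 - p s)) s := hasDerivAt_mixExpWeight h0 h1
  have hp0 : p 0 = lam := by simp [p, mixExpWeight]
  have hthird : ∀ s, |p s * (1 - p s) * (1 - 2 * p s)| ≤ 1 * |s| ^ 0 := fun s => by
    have hps0 := mixExpWeight_nonneg h0 h1 s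
    have hps1 := mixExpWeight_le_one h0 h1 s
    rw [pow_zero, one_mul, abs_le]
    constructor <;> nlinarith [mul_nonneg hps0 (sub_nonneg.2 hps1)]
  have hsecond : ∀ s, |p s * (1 - p s) - lam * (1 - lam)| ≤ 1 * |s| ^ 1 :=
    abs_le_mul_abs_pow_succ_of_hasDerivAt
      (fun s => (((hp s).mul ((hp s).const_sub 1)).sub_const _).congr_deriv (by ring))
      (by simp [hp0]) hthird
  have hfirst : ∀ s, |p s - lam - lam * (1 - lam) * s| ≤ 1 * |s| ^ 2 :=
    abs_le_mul_abs_pow_succ_of_hasDerivAt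
      (fun s => (((hp s).sub_const lam).sub
        ((hasDerivAt_id s).const_mul (lam * (1 - lam)))).congr_deriv (by ring))
      (by simp [hp0]) hsecond
  simpa using abs_le_mul_abs_pow_succ_of_hasDerivAt
    (fun s => (((hasDerivAt_logMixExp h0 h1 s).sub ((hasDerivAt_id s).const_mul lam)).sub
      ((hasDerivAt_pow 2 s).const_mul (lam * (1 - lam) / 2))).congr_deriv (by ring))
    (by simp [logMixExp]) hfirst t

end LogMixExp

theorem stmt12_general (θ lam : ℝ) (hlam : lam ∈ Set.Ioc (0:ℝ) 1) :
    ∀ δ > (0:ℝ), ∃ C : ℝ, ∀ g : ℝ, |g| ≤ δ →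
      |liqGrowth θ lam g - 1 / 2 * (lam * (1 - lam)) * (θ * (1 - θ)) * g ^ 2|
        ≤ C * |g| ^ 3 := by
  intro δ _
  refine ⟨|θ| * |1 - θ| ^ 3 + |1 - θ| * |θ| ^ 3, fun g _ => ?_⟩
  have hE := abs_logMixExp_sub_taylor_le hlam.1.le hlam.2
  set Ea := logMixExp lam (-(1 - θ) * g)
    - lam * (-(1 - θ) * g) - lam * (1 - lam) / 2 * (-(1 - θ) * g) ^ 2
  set Eb := logMixExp lam (θ * g) - lam * (θ * g) - lam * (1 - lam) / 2 * (θ * g) ^ 2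
  have hsplit : liqGrowth θ lam g - 1 / 2 * (lam * (1 - lam)) * (θ * (1 - θ)) * g ^ 2
      = θ * Ea + (1 - θ) * Eb := by
    simp only [Ea, Eb, liqGrowth, logMixExp]
    ring
  calc |liqGrowth θ lam g - 1 / 2 * (lam * (1 - lam)) * (θ * (1 - θ)) * g ^ 2|
      ≤ |θ| * |Ea| + |1 - θ| * |Eb| := by
        rw [hsplit, ← abs_mul, ← abs_mul]; exact abs_add_le _ _
    _ ≤ |θ| * |-(1 - θ) * g| ^ 3 + |1 - θ| * |θ * g| ^ 3 := by
        gcongr; exacts [hE _, hE _]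
    _ = (|θ| * |1 - θ| ^ 3 + |1 - θ| * |θ| ^ 3) * |g| ^ 3 := by
        simp only [abs_mul, abs_neg]; ring

theorem stmt12 (θ lam : ℝ) (hθ : θ ∈ Set.Ioo (0:ℝ) 1) (hlam : lam ∈ Set.Ioc (0:ℝ) 1) :
    ∀ δ > (0:ℝ), ∃ C : ℝ, ∀ g : ℝ, |g| ≤ δ →
      |liqGrowth θ lam g - 1 / 2 * (lam * (1 - lam)) * (θ * (1 - θ)) * g ^ 2|
        ≤ C * |g| ^ 3 :=
  stmt12_general θ lam hlam
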